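/- arXiv:1812.11798 — 8 statements merged into one kernel-verified Lean document; each statement's English description precedes it below -/
import Mathlib

section
/- Let H be a nontrivial real Hilbert space and S : H → H a bounded self-adjoint linear operator which is elliptic, i.e., there exists c > 0 such that ⟨S q, q⟩ ≥ c‖q‖² for all q ∈ H. Let 0 < α < 2/‖S‖ and g ∈ H. Then there exists a unique p ∈ H with S p = g, and for every initial guess p⁰ ∈ H the generalized Richardson iterates defined by p^{j+1} := p^j − α(S p^j − g) satisfy ‖p^j − p‖ ≤ ‖I − αS‖^j · ‖p⁰ − p‖ for all j ∈ ℕ; in particular, since ‖I − αS‖ < 1, the sequence (p^j) converges to p in H. -/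
open RealInnerProductSpace

/-!
Ellipticity alone makes `S` invertible (Lax–Milgram), which gives the unique solution `p`.
The error `p^j - p` is multiplied by `I - αS` at each step. This operator is self-adjoint, so its
norm is the supremum of `|1 - α ⟪S x, x⟫ / ‖x‖²|`, and `c ≤ ⟪S x, x⟫ / ‖x‖² ≤ ‖S‖` puts
`1 - α ⟪S x, x⟫ / ‖x‖²` in `[1 - α ‖S‖, 1 - α c] ⊆ (-1, 1)`.
-/

namespace ContinuousLinearMap

theorem norm_le_of_forall_abs_re_inner_self_le {𝕜 E : Type*} [RCLike 𝕜] [NormedAddCommGroup E]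
    [InnerProductSpace 𝕜 E] (T : E →L[𝕜] E) (hT : (T : E →ₗ[𝕜] E).IsSymmetric) {M : ℝ}
    (hM : 0 ≤ M) (h : ∀ x, |RCLike.re (inner 𝕜 (T x) x)| ≤ M * ‖x‖ ^ 2) : ‖T‖ ≤ M := by
  rw [T.norm_eq_iSup_rayleighQuotient hT]
  refine Real.iSup_le (fun x => ?_) hM
  rcases eq_or_ne x 0 with rfl | hx
  · simpa using hM
  rw [rayleighQuotient, reApplyInnerSelf_apply, abs_div, abs_sq, div_le_iff₀ (by positivity)]
  exact h x

theorem richardson_step_sub {𝕜 E : Type*} [NontriviallyNormedField 𝕜] [NormedAddCommGroup E]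
    [NormedSpace 𝕜 E] (S : E →L[𝕜] E) (α : 𝕜) {g p x : E} (hp : S p = g) :
    x - α • (S x - g) - p = (ContinuousLinearMap.id 𝕜 E - α • S) (x - p) := by
  simp only [sub_apply, smul_apply, id_apply, map_sub, ← hp, smul_sub]
  abel

variable {H : Type*} [NormedAddCommGroup H] [InnerProductSpace ℝ H]

theorem real_inner_map_self_le_norm_mul_sq (S : H →L[ℝ] H) (x : H) :
    ⟪S x, x⟫ ≤ ‖S‖ * ‖x‖ ^ 2 :=
  calc ⟪S x, x⟫ ≤ ‖S x‖ * ‖x‖ := real_inner_le_norm _ _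
    _ ≤ ‖S‖ * ‖x‖ * ‖x‖ := by gcongr; exact S.le_opNorm x
    _ = ‖S‖ * ‖x‖ ^ 2 := by ring

section Coercive

variable {S : H →L[ℝ] H} {c : ℝ}

theorem isUnit_of_forall_mul_sq_le_inner [CompleteSpace H] (hS : ∀ x, c * ‖x‖ ^ 2 ≤ ⟪S x, x⟫)
    (hc : 0 < c) : IsUnit S :=
  isUnit_of_forall_le_norm_inner_map S (c := ⟨c, hc.le⟩) hc fun x => by
    rw [Real.norm_eq_abs, mul_comm]
    exact (hS x).trans (le_abs_self _)

theorem le_norm_of_forall_mul_sq_le_inner [Nontrivial H] (hS : ∀ x, c * ‖x‖ ^ 2 ≤ ⟪S x, x⟫) :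
    c ≤ ‖S‖ := by
  obtain ⟨x, hx⟩ := exists_ne (0 : H)
  have hx2 : 0 < ‖x‖ ^ 2 := by positivity
  exact le_of_mul_le_mul_right ((hS x).trans (S.real_inner_map_self_le_norm_mul_sq x)) hx2

theorem abs_inner_id_sub_smul_self_le (hS : ∀ x, c * ‖x‖ ^ 2 ≤ ⟪S x, x⟫) {α : ℝ} (hα : 0 ≤ α)
    (x : H) :
    |⟪(ContinuousLinearMap.id ℝ H - α • S) x, x⟫| ≤ max (1 - α * c) (α * ‖S‖ - 1) * ‖x‖ ^ 2 := by
  have hx : ⟪(ContinuousLinearMap.id ℝ H - α • S) x, x⟫ = ‖x‖ ^ 2 - α * ⟪S x, x⟫ := by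
    simp [inner_sub_left, real_inner_smul_left]
  have hlow := mul_le_mul_of_nonneg_left (hS x) hα
  have hupp := mul_le_mul_of_nonneg_left (S.real_inner_map_self_le_norm_mul_sq x) hα
  have hleft := mul_le_mul_of_nonneg_right (le_max_left (1 - α * c) (α * ‖S‖ - 1)) (sq_nonneg ‖x‖)
  have hright :=
    mul_le_mul_of_nonneg_right (le_max_right (1 - α * c) (α * ‖S‖ - 1)) (sq_nonneg ‖x‖)
  rw [hx, abs_le]
  constructor <;> nlinarith

theorem norm_id_sub_smul_lt_one [Nontrivial H] (hS : ∀ x, c * ‖x‖ ^ 2 ≤ ⟪S x, x⟫)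
    (hSsymm : (S : H →ₗ[ℝ] H).IsSymmetric) (hc : 0 < c) {α : ℝ} (hα0 : 0 < α)
    (hα2 : α < 2 / ‖S‖) : ‖ContinuousLinearMap.id ℝ H - α • S‖ < 1 := by
  have hαS : α * ‖S‖ < 2 := by
    have hS0 : 0 < ‖S‖ := (div_pos_iff_of_pos_left two_pos).mp (hα0.trans hα2)
    rwa [lt_div_iff₀ hS0] at hα2
  have hcS := le_norm_of_forall_mul_sq_le_inner hS
  have hsymm : ((ContinuousLinearMap.id ℝ H - α • S : H →L[ℝ] H) : H →ₗ[ℝ] H).IsSymmetric :=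
    LinearMap.IsSymmetric.id.sub (hSsymm.smul (by simp))
  refine (norm_le_of_forall_abs_re_inner_self_le _ hsymm
    (M := max (1 - α * c) (α * ‖S‖ - 1)) ?_ fun x => ?_).trans_lt ?_
  · nlinarith [le_max_left (1 - α * c) (α * ‖S‖ - 1), le_max_right (1 - α * c) (α * ‖S‖ - 1)]
  · exact abs_inner_id_sub_smul_self_le hS hα0.le x
  · exact max_lt (by nlinarith) (by linarith)

end Coercive

end ContinuousLinearMap

/-- Generalized Richardson iteration: for a bounded self-adjoint elliptic operator `S` on a
nontrivial real Hilbert space and `0 < α < 2/‖S‖`, the equation `S p = g` has a unique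
solution, and the Richardson iterates `p^{j+1} = p^j - α (S p^j - g)` converge to it with the
geometric rate `‖I - α S‖^j < 1`. -/
theorem stmt_1 {H : Type*} [NormedAddCommGroup H] [InnerProductSpace ℝ H] [CompleteSpace H]
    [Nontrivial H] (S : H →L[ℝ] H)
    (hsa : ∀ q r : H, ⟪S q, r⟫ = ⟪q, S r⟫)
    (c : ℝ) (hc : 0 < c) (hell : ∀ q : H, c * ‖q‖ ^ 2 ≤ ⟪S q, q⟫)
    (α : ℝ) (hα0 : 0 < α) (hα2 : α < 2 / ‖S‖) (g : H) :
    ∃ p : H, S p = g ∧ (∀ p' : H, S p' = g → p' = p) ∧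
      ‖ContinuousLinearMap.id ℝ H - α • S‖ < 1 ∧
      ∀ pseq : ℕ → H, (∀ j : ℕ, pseq (j + 1) = pseq j - α • (S (pseq j) - g)) →
        (∀ j : ℕ, ‖pseq j - p‖ ≤ ‖ContinuousLinearMap.id ℝ H - α • S‖ ^ j * ‖pseq 0 - p‖) ∧
        Filter.Tendsto pseq Filter.atTop (nhds p) := by
  obtain ⟨p, hp, huniq⟩ :=
    (ContinuousLinearMap.isUnit_iff_bijective.mp
      (ContinuousLinearMap.isUnit_of_forall_mul_sq_le_inner hell hc)).existsUnique g
  have hT := ContinuousLinearMap.norm_id_sub_smul_lt_one hell hsa hc hα0 hα2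
  refine ⟨p, hp, huniq, hT, fun pseq hrec => ?_⟩
  have herr (j : ℕ) : ‖pseq j - p‖ ≤ ‖ContinuousLinearMap.id ℝ H - α • S‖ ^ j * ‖pseq 0 - p‖ :=
    le_geom (u := fun j => ‖pseq j - p‖) (norm_nonneg _) j fun k _ => by
      rw [hrec k, S.richardson_step_sub α hp]
      exact ContinuousLinearMap.le_opNorm _ _
  refine ⟨herr, tendsto_iff_norm_sub_tendsto_zero.mpr ?_⟩
  refine squeeze_zero (fun _ => norm_nonneg _) herr ?_
  simpa using (tendsto_pow_atTop_nhds_zero_of_lt_one (norm_nonneg _) hT).mul_const ‖pseq 0 - p‖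
end

section
/- Let (a_ℓ)_{ℓ∈ℕ} be a sequence of nonnegative real numbers. Then the following two statements are equivalent: (a) the series ∑ a_n converges and there exists a constant C > 0 such that ∑_{n=ℓ}^∞ a_n ≤ C·a_ℓ for all ℓ ∈ ℕ; (c) there exist constants 0 < q < 1 and C > 0 such that a_{ℓ+n} ≤ C·q^n·a_ℓ for all n, ℓ ∈ ℕ. -/
/-!
If the tails `T ℓ = ∑_{n ≥ ℓ} a_n` satisfy `T ℓ ≤ C a_ℓ`, then `T (ℓ+1) = T ℓ - a_ℓ ≤ C a_ℓ`
gives `(C + 1) T (ℓ+1) ≤ C T ℓ`: the tails decay geometrically with ratio `C / (C + 1)`,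
and `a_{ℓ+n} ≤ T (ℓ+n) ≤ (C/(C+1))^n T ℓ ≤ C (C/(C+1))^n a_ℓ`. Conversely, domination by
`C q^n a_ℓ` bounds the tail from `ℓ` by the geometric series `C a_ℓ / (1 - q)`.
-/

section GeometricDomination

variable {a : ℕ → ℝ} {q C b : ℝ}

lemma summable_of_le_geometric (ha : ∀ n, 0 ≤ a n) (hq₀ : 0 ≤ q) (hq₁ : q < 1)
    (h : ∀ n, a n ≤ C * q ^ n * b) : Summable a :=
  .of_nonneg_of_le ha h (((summable_geometric_of_lt_one hq₀ hq₁).mul_left C).mul_right b)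

lemma tsum_le_of_le_geometric (ha : ∀ n, 0 ≤ a n) (hq₀ : 0 ≤ q) (hq₁ : q < 1)
    (h : ∀ n, a n ≤ C * q ^ n * b) : ∑' n, a n ≤ C / (1 - q) * b := calc
  ∑' n, a n ≤ ∑' n, C * q ^ n * b :=
    (summable_of_le_geometric ha hq₀ hq₁ h).tsum_le_tsum h
      (((summable_geometric_of_lt_one hq₀ hq₁).mul_left C).mul_right b)
  _ = C / (1 - q) * b := by
    rw [tsum_mul_right, tsum_mul_left, tsum_geometric_of_lt_one hq₀ hq₁, div_eq_mul_inv]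

end GeometricDomination

noncomputable def tailSum (a : ℕ → ℝ) (ℓ : ℕ) : ℝ := ∑' n, a (ℓ + n)

namespace tailSum

variable {a : ℕ → ℝ}

lemma summable_shift (hs : Summable a) (ℓ : ℕ) : Summable fun n ↦ a (ℓ + n) := by
  simpa only [add_comm ℓ] using (summable_nat_add_iff ℓ).2 hs

lemma le_self (ha : ∀ n, 0 ≤ a n) (hs : Summable a) (ℓ : ℕ) : a ℓ ≤ tailSum a ℓ := by
  simpa [tailSum] using (summable_shift hs ℓ).le_tsum 0 fun n _ ↦ ha _

lemma eq_add_succ (hs : Summable a) (ℓ : ℕ) : tailSum a ℓ = a ℓ + tailSum a (ℓ + 1) := by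
  rw [tailSum, (summable_shift hs ℓ).tsum_eq_zero_add, tailSum]
  simp only [add_zero, add_right_comm ℓ, add_assoc]

lemma succ_le (ha : ∀ n, 0 ≤ a n) (hs : Summable a) {C : ℝ} (hC : 0 ≤ C) {ℓ : ℕ}
    (h : tailSum a ℓ ≤ C * a ℓ) : tailSum a (ℓ + 1) ≤ C / (C + 1) * tailSum a ℓ := by
  have hrec := eq_add_succ hs ℓ
  have hmono : tailSum a (ℓ + 1) ≤ tailSum a ℓ := by linarith [ha ℓ]
  rw [div_mul_eq_mul_div, le_div_iff₀ (by linarith)]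
  nlinarith

lemma add_le_geometric (ha : ∀ n, 0 ≤ a n) (hs : Summable a) {C : ℝ} (hC : 0 ≤ C)
    (h : ∀ ℓ, tailSum a ℓ ≤ C * a ℓ) (ℓ n : ℕ) :
    tailSum a (ℓ + n) ≤ (C / (C + 1)) ^ n * tailSum a ℓ :=
  le_geom (u := fun k ↦ tailSum a (ℓ + k)) (by positivity) n fun k _ ↦ succ_le ha hs hC (h _)

end tailSum

/-- For a nonnegative real sequence `(a_ℓ)`, the uniform tail-summability condition
`∑_{n=ℓ}^∞ a_n ≤ C a_ℓ` is equivalent to uniform geometric decay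
`a_{ℓ+n} ≤ C q^n a_ℓ` with some `0 < q < 1`. -/
theorem stmt_3 (a : ℕ → ℝ) (ha : ∀ ℓ : ℕ, 0 ≤ a ℓ) :
    (Summable a ∧ ∃ C : ℝ, 0 < C ∧ ∀ ℓ : ℕ, (∑' n : ℕ, a (ℓ + n)) ≤ C * a ℓ) ↔
    (∃ q C : ℝ, 0 < q ∧ q < 1 ∧ 0 < C ∧ ∀ n ℓ : ℕ, a (ℓ + n) ≤ C * q ^ n * a ℓ) := by
  constructor
  · rintro ⟨hs, C, hC, htail⟩
    refine ⟨C / (C + 1), C, by positivity, (div_lt_one (by linarith)).2 (by linarith), hC,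
      fun n ℓ ↦ ?_⟩
    calc a (ℓ + n) ≤ tailSum a (ℓ + n) := tailSum.le_self ha hs _
      _ ≤ (C / (C + 1)) ^ n * tailSum a ℓ := tailSum.add_le_geometric ha hs hC.le htail ℓ n
      _ ≤ (C / (C + 1)) ^ n * (C * a ℓ) := by gcongr; exact htail ℓ
      _ = C * (C / (C + 1)) ^ n * a ℓ := by ring
  · rintro ⟨q, C, hq₀, hq₁, hC, h⟩
    refine ⟨summable_of_le_geometric ha hq₀.le hq₁ fun n ↦ by simpa using h n 0,
      C / (1 - q), div_pos hC (by linarith),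
      fun ℓ ↦ tsum_le_of_le_geometric (fun n ↦ ha _) hq₀.le hq₁ (h · ℓ)⟩
end

section
/- Let (a_ℓ)_{ℓ∈ℕ} be a sequence of strictly positive real numbers. Then the following two statements are equivalent: (b) for every s > 0 there exists a constant C > 0 such that ∑_{n=0}^{ℓ} a_n^{-1/s} ≤ C·a_ℓ^{-1/s} for all ℓ ∈ ℕ; (c) there exist constants 0 < q < 1 and C > 0 such that a_{ℓ+n} ≤ C·q^n·a_ℓ for all n, ℓ ∈ ℕ. -/
/-!
With `b n := a n ^ (-1/s)`, condition (c) says `b ℓ ≤ D rⁿ b (ℓ + n)` with `D = C ^ (1/s)` and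
`r = q ^ (1/s) < 1`, and then the partial sums of `b` up to `ℓ` are bounded by `b ℓ` times
a geometric series.
Conversely, for `s = 1` the partial sums `S ℓ` of `b = a⁻¹` satisfy `S ℓ ≤ C (S ℓ - S (ℓ - 1))`,
i.e. `S (ℓ - 1) ≤ (1 - 1/C) S ℓ`, so they grow geometrically, and so does `b ≤ S ≤ C b`.
-/

open Finset

theorem sum_range_succ_le_of_geometric_growth {b : ℕ → ℝ} {r D : ℝ} (hb : ∀ n, 0 ≤ b n)
    (hr0 : 0 ≤ r) (hr1 : r < 1) (hD : 0 ≤ D) (h : ∀ n ℓ, b ℓ ≤ D * r ^ n * b (ℓ + n)) (ℓ : ℕ) :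
    ∑ n ∈ range (ℓ + 1), b n ≤ D * (1 - r)⁻¹ * b ℓ := by
  have hterm : ∀ n ∈ range (ℓ + 1), b n ≤ D * b ℓ * r ^ (ℓ - n) := fun n hn => by
    have := h (ℓ - n) n
    rw [Nat.add_sub_cancel' (Nat.lt_succ_iff.1 (mem_range.1 hn))] at this
    linarith
  calc ∑ n ∈ range (ℓ + 1), b n ≤ ∑ n ∈ range (ℓ + 1), D * b ℓ * r ^ (ℓ - n) := sum_le_sum hterm
    _ = D * b ℓ * ∑ k ∈ range (ℓ + 1), r ^ k := by
      rw [← mul_sum]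
      conv_rhs => rw [← sum_range_reflect]
      simp only [add_tsub_cancel_right]
    _ ≤ D * b ℓ * (1 - r)⁻¹ := by
      gcongr
      · exact mul_nonneg hD (hb ℓ)
      · have := geom_sum_Ico_le_of_lt_one (m := 0) (n := ℓ + 1) hr0 hr1
        rwa [← range_eq_Ico, pow_zero, one_div] at this
    _ = D * (1 - r)⁻¹ * b ℓ := by ring

theorem one_lt_of_sum_range_succ_le {b : ℕ → ℝ} {C : ℝ} (hb : ∀ n, 0 < b n)
    (h : ∀ ℓ, ∑ n ∈ range (ℓ + 1), b n ≤ C * b ℓ) : 1 < C := by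
  have h1 := h 1
  simp only [sum_range_succ, sum_range_zero, zero_add] at h1
  nlinarith [hb 0, hb 1]

theorem geometric_growth_of_sum_range_succ_le {b : ℕ → ℝ} {C : ℝ} (hb : ∀ n, 0 ≤ b n)
    (hC : 1 ≤ C) (h : ∀ ℓ, ∑ n ∈ range (ℓ + 1), b n ≤ C * b ℓ) (n ℓ : ℕ) :
    b ℓ ≤ C * (1 - C⁻¹) ^ n * b (ℓ + n) := by
  set S : ℕ → ℝ := fun ℓ => ∑ n ∈ range (ℓ + 1), b n
  have hq : 0 ≤ 1 - C⁻¹ := sub_nonneg.2 (inv_le_one_of_one_le₀ hC)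
  have step : ∀ m, S m ≤ (1 - C⁻¹) * S (m + 1) := fun m => by
    have hsucc : S (m + 1) = S m + b (m + 1) := sum_range_succ _ _
    have : C⁻¹ * S (m + 1) ≤ b (m + 1) := by
      rw [inv_mul_le_iff₀ (by linarith)]
      exact h (m + 1)
    linarith
  have iter : ∀ n, S ℓ ≤ (1 - C⁻¹) ^ n * S (ℓ + n) := fun n => by
    induction n with
    | zero => simp
    | succ n ih =>
      calc S ℓ ≤ (1 - C⁻¹) ^ n * S (ℓ + n) := ih
        _ ≤ (1 - C⁻¹) ^ n * ((1 - C⁻¹) * S (ℓ + n + 1)) := by gcongr; exact step _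
        _ = (1 - C⁻¹) ^ (n + 1) * S (ℓ + (n + 1)) := by ring_nf
  calc b ℓ ≤ S ℓ := single_le_sum (fun i _ => hb i) (self_mem_range_succ ℓ)
    _ ≤ (1 - C⁻¹) ^ n * S (ℓ + n) := iter n
    _ ≤ (1 - C⁻¹) ^ n * (C * b (ℓ + n)) := by gcongr; exact h _
    _ = C * (1 - C⁻¹) ^ n * b (ℓ + n) := by ring

theorem le_mul_iff_rpow_neg_le {x y K p : ℝ} (hx : 0 < x) (hy : 0 < y) (hK : 0 < K)
    (hp : 0 < p) : y ≤ K * x ↔ x ^ (-p) ≤ K ^ p * y ^ (-p) := by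
  rw [Real.rpow_neg hx.le, Real.rpow_neg hy.le, ← div_eq_mul_inv,
    inv_le_comm₀ (by positivity) (by positivity), inv_div, div_le_iff₀ (by positivity),
    mul_comm (x ^ p), ← Real.mul_rpow hK.le hx.le, Real.rpow_le_rpow_iff hy.le (by positivity) hp]

theorem mul_pow_rpow {C q p : ℝ} (hC : 0 ≤ C) (hq : 0 ≤ q) (n : ℕ) :
    (C * q ^ n) ^ p = C ^ p * (q ^ p) ^ n := by
  rw [Real.mul_rpow hC (pow_nonneg hq n), ← Real.rpow_natCast_mul hq, mul_comm (n : ℝ),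
    Real.rpow_mul_natCast hq]

/-- For a strictly positive real sequence `(a_ℓ)`, the condition
`∑_{n=0}^{ℓ} a_n^{-1/s} ≤ C a_ℓ^{-1/s}` (for every `s > 0`) is equivalent to uniform
geometric decay `a_{ℓ+n} ≤ C q^n a_ℓ` with some `0 < q < 1`. -/
theorem stmt_4 (a : ℕ → ℝ) (ha : ∀ ℓ : ℕ, 0 < a ℓ) :
    (∀ s : ℝ, 0 < s → ∃ C : ℝ, 0 < C ∧
        ∀ ℓ : ℕ, (∑ n ∈ Finset.range (ℓ + 1), a n ^ (-(1 / s))) ≤ C * a ℓ ^ (-(1 / s))) ↔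
    (∃ q C : ℝ, 0 < q ∧ q < 1 ∧ 0 < C ∧ ∀ n ℓ : ℕ, a (ℓ + n) ≤ C * q ^ n * a ℓ) := by
  have hb : ∀ (p : ℝ) n, 0 < a n ^ p := fun p n => Real.rpow_pos_of_pos (ha n) p
  constructor
  · intro h
    obtain ⟨C, -, hsum⟩ := h 1 one_pos
    simp only [div_one] at hsum
    have hC : 1 < C := one_lt_of_sum_range_succ_le (hb _) hsum
    have hC0 : 0 < C := one_pos.trans hC
    have hq : 0 < 1 - C⁻¹ := sub_pos.2 (inv_lt_one_of_one_lt₀ hC)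
    refine ⟨1 - C⁻¹, C, hq, sub_lt_self _ (inv_pos.2 hC0), hC0, fun n ℓ => ?_⟩
    rw [le_mul_iff_rpow_neg_le (ha ℓ) (ha (ℓ + n)) (by positivity) one_pos,
      mul_pow_rpow hC0.le hq.le, Real.rpow_one, Real.rpow_one]
    exact geometric_growth_of_sum_range_succ_le (fun n => (hb _ n).le) hC.le hsum n ℓ
  · rintro ⟨q, C, hq0, hq1, hC, hgeo⟩ s hs
    have hp : 0 < 1 / s := one_div_pos.2 hs
    have hr : q ^ (1 / s) < 1 := Real.rpow_lt_one hq0.le hq1 hp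
    refine ⟨C ^ (1 / s) * (1 - q ^ (1 / s))⁻¹,
      mul_pos (by positivity) (inv_pos.2 (sub_pos.2 hr)),
      sum_range_succ_le_of_geometric_growth (fun n => (hb _ n).le) (by positivity) hr
        (by positivity) fun n ℓ => ?_⟩
    rw [← mul_pow_rpow hC.le hq0.le,
      ← le_mul_iff_rpow_neg_le (ha ℓ) (ha (ℓ + n)) (by positivity) hp]
    exact hgeo n ℓ
end

section
/- Let ι be a type, n : ι → ℕ, and ρ : ι → ℝ with ρ(i) ≥ 0 for all i. Assume: (i) there exists i₀ ∈ ι with n(i₀) = 0; (ii) for every N ∈ ℕ the set {i ∈ ι : n(i) ≤ N} is finite; (iii) inf_{i ∈ ι} ρ(i) = 0, i.e., for every ε > 0 there exists i ∈ ι with ρ(i) ≤ ε. Fix s > 0. Then, as an identity in [0, ∞], sup_{N ∈ ℕ} ( (N+1)^s · min{ ρ(i) : n(i) ≤ N } ) = sup_{ε > 0} ( ε · min{ n(i)^s : ρ(i) ≤ ε } ), where both minima are attained (the first over a nonempty finite set, the second because n takes values in ℕ over a nonempty set). -/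
open scoped ENNReal

/-! Both norms equal the supremum of `(N + 1) ^ s * ε` over the pairs `(N, ε)` with `ε > 0` such
that every index of size at most `N` has error above `ε`. Such a pair bounds the infimum of `ρ` at
level `N` below by `ε` and the infimum of `n ^ s` at accuracy `ε` below by `(N + 1) ^ s`.
Conversely, every `ε` below the infimum of `ρ` at level `N` gives such a pair, and so does
`ε` together with `N + 1`, the smallest size reaching accuracy `ε`. -/

lemma ENNReal.mul_le_of_forall_pos_ofReal_lt {a b c : ℝ≥0∞}
    (h : ∀ ε : ℝ, 0 < ε → ENNReal.ofReal ε < b → a * ENNReal.ofReal ε ≤ c) : a * b ≤ c := by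
  refine ENNReal.mul_le_of_forall_lt fun a' ha' b' hb' => ?_
  rcases eq_or_ne b' 0 with rfl | hb'0
  · simp
  have hb'top : b' ≠ ∞ := hb'.ne_top
  calc a' * b' ≤ a * ENNReal.ofReal b'.toReal := by
        rw [ENNReal.ofReal_toReal hb'top]; gcongr
    _ ≤ c := h _ (ENNReal.toReal_pos hb'0 hb'top) (by rwa [ENNReal.ofReal_toReal hb'top])

namespace ApproxNorm

variable {ι : Type*} (n : ι → ℕ) (ρ : ι → ℝ) (s : ℝ)

noncomputable def sizeNorm : ℝ≥0∞ :=
  ⨆ N : ℕ, ENNReal.ofReal ((N + 1 : ℝ) ^ s) * ⨅ i ∈ {i | n i ≤ N}, ENNReal.ofReal (ρ i)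

noncomputable def accuracyNorm : ℝ≥0∞ :=
  ⨆ ε ∈ Set.Ioi (0 : ℝ), ENNReal.ofReal ε * ⨅ i ∈ {i | ρ i ≤ ε}, ENNReal.ofReal ((n i : ℝ) ^ s)

variable {n ρ s} {N : ℕ} {ε : ℝ}

lemma ofReal_le_biInf_of_forall_lt (h : ∀ i, n i ≤ N → ε < ρ i) :
    ENNReal.ofReal ε ≤ ⨅ i ∈ {i | n i ≤ N}, ENNReal.ofReal (ρ i) :=
  le_iInf₂ fun i hi => ENNReal.ofReal_le_ofReal (h i hi).le

lemma ofReal_rpow_le_biInf_of_forall_lt (hs : 0 ≤ s) (h : ∀ i, n i ≤ N → ε < ρ i) :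
    ENNReal.ofReal ((N + 1 : ℝ) ^ s) ≤ ⨅ i ∈ {i | ρ i ≤ ε}, ENNReal.ofReal ((n i : ℝ) ^ s) := by
  refine le_iInf₂ fun i hi => ENNReal.ofReal_le_ofReal (Real.rpow_le_rpow (by positivity) ?_ hs)
  have : N < n i := lt_of_not_ge fun hle => (h i hle).not_ge hi
  exact_mod_cast this

lemma le_sizeNorm (h : ∀ i, n i ≤ N → ε < ρ i) :
    ENNReal.ofReal ((N + 1 : ℝ) ^ s) * ENNReal.ofReal ε ≤ sizeNorm n ρ s :=
  le_iSup_of_le N (by gcongr; exact ofReal_le_biInf_of_forall_lt h)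

lemma le_accuracyNorm (hs : 0 ≤ s) (hε : 0 < ε) (h : ∀ i, n i ≤ N → ε < ρ i) :
    ENNReal.ofReal ((N + 1 : ℝ) ^ s) * ENNReal.ofReal ε ≤ accuracyNorm n ρ s :=
  le_iSup₂_of_le ε hε (by rw [mul_comm]; gcongr; exact ofReal_rpow_le_biInf_of_forall_lt hs h)

lemma sizeNorm_le_accuracyNorm (hs : 0 ≤ s) : sizeNorm n ρ s ≤ accuracyNorm n ρ s := by
  refine iSup_le fun N => ENNReal.mul_le_of_forall_pos_ofReal_lt fun ε hε hlt => ?_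
  refine le_accuracyNorm hs hε fun i hi => ?_
  exact (ENNReal.ofReal_lt_ofReal_iff_of_nonneg hε.le).1 (hlt.trans_le (biInf_le _ hi))

lemma accuracyNorm_le_sizeNorm (hs : 0 < s) (hinf : ∀ ε : ℝ, 0 < ε → ∃ i, ρ i ≤ ε) :
    accuracyNorm n ρ s ≤ sizeNorm n ρ s := by
  refine iSup₂_le fun ε hε => ?_
  obtain ⟨j, hj⟩ := hinf ε hε
  obtain ⟨i₁, hi₁, hmin⟩ : ∃ i₁, ρ i₁ ≤ ε ∧ ∀ i, ρ i ≤ ε → n i₁ ≤ n i :=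
    ⟨_, Function.argminOn_mem n {i | ρ i ≤ ε} ⟨j, hj⟩, fun i hi => Function.argminOn_le n _ hi⟩
  refine (mul_le_mul_right (biInf_le (fun i ↦ ENNReal.ofReal ((n i : ℝ) ^ s)) hi₁) _).trans ?_
  rcases eq_or_ne (n i₁) 0 with hzero | hne
  · simp [hzero, Real.zero_rpow hs.ne']
  obtain ⟨N, hN⟩ := Nat.exists_eq_add_one_of_ne_zero hne
  have h : ∀ i, n i ≤ N → ε < ρ i := fun i hi =>
    lt_of_not_ge fun hρi => by have := hmin i hρi; omega
  rw [hN, mul_comm]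
  exact_mod_cast le_sizeNorm h

end ApproxNorm

theorem stmt_5_general {ι : Type*} (n : ι → ℕ) (ρ : ι → ℝ)
    (hinf : ∀ ε : ℝ, 0 < ε → ∃ i, ρ i ≤ ε) (s : ℝ) (hs : 0 < s) :
    (⨆ N : ℕ, ENNReal.ofReal ((N + 1 : ℝ) ^ s) *
        ⨅ i ∈ {i | n i ≤ N}, ENNReal.ofReal (ρ i)) =
    ⨆ ε ∈ Set.Ioi (0 : ℝ), ENNReal.ofReal ε *
        ⨅ i ∈ {i | ρ i ≤ ε}, ENNReal.ofReal ((n i : ℝ) ^ s) :=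
  le_antisymm (ApproxNorm.sizeNorm_le_accuracyNorm hs.le)
    (ApproxNorm.accuracyNorm_le_sizeNorm hs hinf)

/-- Equality of the two definitions of approximation classes: the accuracy-based and the
cardinality-based approximation norms coincide (as an identity in `[0,∞]`). -/
theorem stmt_5 {ι : Type*} (n : ι → ℕ) (ρ : ι → ℝ) (hρ : ∀ i, 0 ≤ ρ i)
    (hinit : ∃ i₀, n i₀ = 0) (hfin : ∀ N : ℕ, {i | n i ≤ N}.Finite)
    (hinf : ∀ ε : ℝ, 0 < ε → ∃ i, ρ i ≤ ε) (s : ℝ) (hs : 0 < s) :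
    (⨆ N : ℕ, ENNReal.ofReal ((N + 1 : ℝ) ^ s) *
        ⨅ i ∈ {i | n i ≤ N}, ENNReal.ofReal (ρ i)) =
    ⨆ ε ∈ Set.Ioi (0 : ℝ), ENNReal.ofReal ε *
        ⨅ i ∈ {i | ρ i ≤ ε}, ENNReal.ofReal ((n i : ℝ) ^ s) :=
  stmt_5_general n ρ hinf s hs
end

section
/- Let H be a real Hilbert space, S : H → H a bounded self-adjoint linear operator, and C ≥ 1 a constant such that C^{-2}·‖q‖² ≤ ⟨S q, q⟩ ≤ ‖q‖² for all q ∈ H. Let K ⊆ H be a closed linear subspace and Π : H → H the orthogonal projection onto K. Then for every e ∈ K there holds the chain of inequalities ‖Π(S e)‖² ≤ ‖S e‖² ≤ ⟨S e, e⟩ ≤ C²·‖Π(S e)‖². -/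
/-!
Writing `v = S e`, positivity of `S` applied to `e - v` together with `⟨S v, v⟩ ≤ ‖v‖²` gives
`‖v‖² ≤ ⟨v, e⟩`. Since `e ∈ K`, `⟨v, e⟩ = ⟨Π v, e⟩ ≤ ‖Π v‖ ‖e‖`, and the lower bound
`‖e‖² ≤ C² ⟨v, e⟩` turns this Cauchy–Schwarz estimate into `⟨v, e⟩ ≤ C² ‖Π v‖²`.
-/

open RealInnerProductSpace

section

variable {E : Type*} [NormedAddCommGroup E] [InnerProductSpace ℝ E]

theorem norm_apply_le_of_symmetric_of_idempotent {P : E →L[ℝ] E}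
    (hsym : ∀ x y : E, ⟪P x, y⟫ = ⟪x, P y⟫) (hidem : ∀ x : E, P (P x) = P x) (v : E) :
    ‖P v‖ ≤ ‖v‖ := by
  have hsq : ‖P v‖ ^ 2 ≤ ‖v‖ * ‖P v‖ :=
    calc ‖P v‖ ^ 2 = ⟪P v, P v⟫ := (real_inner_self_eq_norm_sq _).symm
      _ = ⟪v, P v⟫ := by rw [hsym, hidem]
      _ ≤ ‖v‖ * ‖P v‖ := real_inner_le_norm _ _
  nlinarith [norm_nonneg v, norm_nonneg (P v)]

theorem norm_apply_sq_le_inner_apply_self {S : E →L[ℝ] E}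
    (hsym : ∀ q r : E, ⟪S q, r⟫ = ⟪q, S r⟫) (hnonneg : ∀ q : E, 0 ≤ ⟪S q, q⟫)
    (hle : ∀ q : E, ⟪S q, q⟫ ≤ ‖q‖ ^ 2) (e : E) :
    ‖S e‖ ^ 2 ≤ ⟪S e, e⟫ := by
  have hdiff := hnonneg (e - S e)
  rw [map_sub, inner_sub_left, inner_sub_right, inner_sub_right, hsym (S e) e,
    real_inner_self_eq_norm_sq] at hdiff
  linarith [hle (S e)]

theorem real_inner_le_mul_norm_sq_of_norm_sq_le {x e : E} {c : ℝ} (hc : 0 ≤ c)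
    (he : ‖e‖ ^ 2 ≤ c * ⟪x, e⟫) : ⟪x, e⟫ ≤ c * ‖x‖ ^ 2 := by
  rcases le_or_gt ⟪x, e⟫ 0 with hneg | hpos
  · exact hneg.trans (by positivity)
  have hcs : ⟪x, e⟫ ^ 2 ≤ ‖x‖ ^ 2 * ‖e‖ ^ 2 := by
    rw [← mul_pow]; exact pow_le_pow_left₀ hpos.le (real_inner_le_norm _ _) 2
  have : ⟪x, e⟫ * ⟪x, e⟫ ≤ (c * ‖x‖ ^ 2) * ⟪x, e⟫ := by
    nlinarith [mul_le_mul_of_nonneg_left he (sq_nonneg ‖x‖)]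
  exact le_of_mul_le_mul_right this hpos

end

theorem stmt_7_general {H : Type*} [NormedAddCommGroup H] [InnerProductSpace ℝ H]
    (S : H →L[ℝ] H) (hsa : ∀ q r : H, ⟪S q, r⟫ = ⟪q, S r⟫)
    (C : ℝ) (hC : 1 ≤ C)
    (hlow : ∀ q : H, (C ^ 2)⁻¹ * ‖q‖ ^ 2 ≤ ⟪S q, q⟫)
    (hup : ∀ q : H, ⟪S q, q⟫ ≤ ‖q‖ ^ 2)
    (K : Submodule ℝ H)
    (Proj : H →L[ℝ] H) (hProjmem : ∀ x : H, Proj x ∈ K)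
    (hProjid : ∀ e ∈ K, Proj e = e)
    (hProjsa : ∀ x y : H, ⟪Proj x, y⟫ = ⟪x, Proj y⟫) :
    ∀ e ∈ K, ‖Proj (S e)‖ ^ 2 ≤ ‖S e‖ ^ 2 ∧ ‖S e‖ ^ 2 ≤ ⟪S e, e⟫ ∧
      ⟪S e, e⟫ ≤ C ^ 2 * ‖Proj (S e)‖ ^ 2 := by
  intro e he
  have hSpos : ∀ q : H, 0 ≤ ⟪S q, q⟫ := fun q => (by positivity : (0 : ℝ) ≤ _).trans (hlow q)
  have hProj : ⟪Proj (S e), e⟫ = ⟪S e, e⟫ := by rw [hProjsa, hProjid e he]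
  have hcoer : ‖e‖ ^ 2 ≤ C ^ 2 * ⟪S e, e⟫ := by
    rw [← inv_mul_le_iff₀ (pow_pos (zero_lt_one.trans_le hC) 2)]; exact hlow e
  refine ⟨?_, norm_apply_sq_le_inner_apply_self hsa hSpos hup e, ?_⟩
  · exact pow_le_pow_left₀ (norm_nonneg _) (norm_apply_le_of_symmetric_of_idempotent hProjsa
      (fun x => hProjid _ (hProjmem x)) _) 2
  · rw [← hProj] at hcoer ⊢
    exact real_inner_le_mul_norm_sq_of_norm_sq_le (sq_nonneg C) hcoer

/-- Let `S` be bounded self-adjoint with `C⁻² ‖q‖² ≤ ⟨S q, q⟩ ≤ ‖q‖²`, and let `Proj` be the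
orthogonal projection onto a closed subspace `K` (characterized by: `Proj` maps into `K`,
restricts to the identity on `K`, and is self-adjoint). Then for every `e ∈ K`:
`‖Proj(S e)‖² ≤ ‖S e‖² ≤ ⟨S e, e⟩ ≤ C² ‖Proj(S e)‖²`. -/
theorem stmt_7 {H : Type*} [NormedAddCommGroup H] [InnerProductSpace ℝ H] [CompleteSpace H]
    (S : H →L[ℝ] H) (hsa : ∀ q r : H, ⟪S q, r⟫ = ⟪q, S r⟫)
    (C : ℝ) (hC : 1 ≤ C)
    (hlow : ∀ q : H, (C ^ 2)⁻¹ * ‖q‖ ^ 2 ≤ ⟪S q, q⟫)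
    (hup : ∀ q : H, ⟪S q, q⟫ ≤ ‖q‖ ^ 2)
    (K : Submodule ℝ H) (hK : IsClosed (K : Set H))
    (Proj : H →L[ℝ] H) (hProjmem : ∀ x : H, Proj x ∈ K)
    (hProjid : ∀ e ∈ K, Proj e = e)
    (hProjsa : ∀ x y : H, ⟪Proj x, y⟫ = ⟪x, Proj y⟫) :
    ∀ e ∈ K, ‖Proj (S e)‖ ^ 2 ≤ ‖S e‖ ^ 2 ∧ ‖S e‖ ^ 2 ≤ ⟪S e, e⟫ ∧
      ⟪S e, e⟫ ≤ C ^ 2 * ‖Proj (S e)‖ ^ 2 :=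
  stmt_7_general S hsa C hC hlow hup K Proj hProjmem hProjid hProjsa
end

section
/- Let H be a real Hilbert space and S : H → H a bounded self-adjoint linear operator with operator norm ‖S‖ ≤ 1 and satisfying the ellipticity bound ⟨S q, q⟩ ≥ c·‖q‖² for all q ∈ H, where 0 < c ≤ 1. Let K ⊆ H be a closed linear subspace and Π : H → H the orthogonal projection onto K. Then the discretized Uzawa update is a uniform contraction on K: for every e ∈ K, ‖e − Π(S e)‖ ≤ (1 − c)·‖e‖. -/
/-! The update is `e ↦ Π ((1 - S) e)` on `K`. Since `Π` is an orthogonal projection it does not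
increase norms, and `1 - S` is a symmetric operator whose quadratic form lies between `0`
(because `‖S‖ ≤ 1`) and `(1 - c) ‖x‖²` (ellipticity), so its norm, the supremum of its
Rayleigh quotient, is at most `1 - c`. -/

open RealInnerProductSpace

section

variable {𝕜 E : Type*} [RCLike 𝕜] [NormedAddCommGroup E] [InnerProductSpace 𝕜 E]

open RCLike in
theorem ContinuousLinearMap.opNorm_le_of_isSymmetric {T : E →L[𝕜] E}
    (hT : (T : E →ₗ[𝕜] E).IsSymmetric) {M : ℝ} (hM : 0 ≤ M)
    (h : ∀ x, |re (inner 𝕜 (T x) x)| ≤ M * ‖x‖ ^ 2) : ‖T‖ ≤ M := by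
  rw [T.norm_eq_iSup_rayleighQuotient hT]
  refine ciSup_le fun x ↦ ?_
  rcases eq_or_ne x 0 with rfl | hx
  · simpa using hM
  · rw [rayleighQuotient, reApplyInnerSelf_apply, abs_div, abs_sq, div_le_iff₀ (by positivity)]
    exact h x

theorem LinearMap.IsSymmetricProjection.norm_apply_le {p : E →L[𝕜] E}
    (hp : (p : E →ₗ[𝕜] E).IsSymmetricProjection) (x : E) : ‖p x‖ ≤ ‖x‖ := by
  obtain ⟨_, hp⟩ := LinearMap.isSymmetricProjection_iff_eq_coe_starProjection_range.mp hp
  have hpx : p x = (LinearMap.range (p : E →ₗ[𝕜] E)).starProjection x := congr($hp x)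
  simpa [hpx] using (LinearMap.range (p : E →ₗ[𝕜] E)).starProjection.le_of_opNorm_le
    (Submodule.starProjection_norm_le _) x

end

theorem ContinuousLinearMap.norm_one_sub_le_of_coercive {H : Type*} [NormedAddCommGroup H]
    [InnerProductSpace ℝ H] {S : H →L[ℝ] H} (hS : (S : H →ₗ[ℝ] H).IsSymmetric) (hSnorm : ‖S‖ ≤ 1)
    {c : ℝ} (hc1 : c ≤ 1) (hell : ∀ q : H, c * ‖q‖ ^ 2 ≤ ⟪S q, q⟫) : ‖1 - S‖ ≤ 1 - c := by
  have hsymm : ((1 - S : H →L[ℝ] H) : H →ₗ[ℝ] H).IsSymmetric := by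
    simpa using LinearMap.IsSymmetric.one.sub hS
  refine opNorm_le_of_isSymmetric hsymm (sub_nonneg.mpr hc1) fun x ↦ ?_
  have hSx : ⟪S x, x⟫ ≤ ‖x‖ ^ 2 :=
    calc ⟪S x, x⟫ ≤ ‖S x‖ * ‖x‖ := real_inner_le_norm _ _
      _ ≤ ‖S‖ * ‖x‖ * ‖x‖ := by gcongr; exact S.le_opNorm x
      _ ≤ ‖x‖ ^ 2 := by nlinarith [norm_nonneg x]
  have hform : ⟪(1 - S) x, x⟫ = ‖x‖ ^ 2 - ⟪S x, x⟫ := by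
    rw [_root_.sub_apply, one_apply_eq_self, inner_sub_left, real_inner_self_eq_norm_sq]
  rw [RCLike.re_to_real, hform, abs_le]
  constructor <;> nlinarith [hell x, sq_nonneg ‖x‖]

theorem stmt_8_general {H : Type*} [NormedAddCommGroup H] [InnerProductSpace ℝ H]
    (S : H →L[ℝ] H) (hsa : ∀ q r : H, ⟪S q, r⟫ = ⟪q, S r⟫)
    (hSnorm : ‖S‖ ≤ 1)
    (c : ℝ) (hc1 : c ≤ 1)
    (hell : ∀ q : H, c * ‖q‖ ^ 2 ≤ ⟪S q, q⟫)
    (K : Submodule ℝ H)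
    (Proj : H →L[ℝ] H) (hProjmem : ∀ x : H, Proj x ∈ K)
    (hProjid : ∀ e ∈ K, Proj e = e)
    (hProjsa : ∀ x y : H, ⟪Proj x, y⟫ = ⟪x, Proj y⟫) :
    ∀ e ∈ K, ‖e - Proj (S e)‖ ≤ (1 - c) * ‖e‖ := by
  intro e he
  have hProj : (Proj : H →ₗ[ℝ] H).IsSymmetricProjection :=
    ⟨LinearMap.ext fun x ↦ hProjid _ (hProjmem x), hProjsa⟩
  calc ‖e - Proj (S e)‖ = ‖Proj ((1 - S) e)‖ := by
        rw [sub_apply, one_apply_eq_self, map_sub, hProjid e he]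
    _ ≤ ‖(1 - S) e‖ := hProj.norm_apply_le _
    _ ≤ ‖1 - S‖ * ‖e‖ := (1 - S).le_opNorm e
    _ ≤ (1 - c) * ‖e‖ := by
        gcongr; exact ContinuousLinearMap.norm_one_sub_le_of_coercive hsa hSnorm hc1 hell

/-- Contraction of the discretized Uzawa update: if `S` is bounded self-adjoint with
`‖S‖ ≤ 1` and `⟨S q, q⟩ ≥ c ‖q‖²` with `0 < c ≤ 1`, and `Proj` is the orthogonal projection
onto a closed subspace `K`, then `‖e − Proj(S e)‖ ≤ (1 − c) ‖e‖` for every `e ∈ K`. -/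
theorem stmt_8 {H : Type*} [NormedAddCommGroup H] [InnerProductSpace ℝ H] [CompleteSpace H]
    (S : H →L[ℝ] H) (hsa : ∀ q r : H, ⟪S q, r⟫ = ⟪q, S r⟫)
    (hSnorm : ‖S‖ ≤ 1)
    (c : ℝ) (hc0 : 0 < c) (hc1 : c ≤ 1)
    (hell : ∀ q : H, c * ‖q‖ ^ 2 ≤ ⟪S q, q⟫)
    (K : Submodule ℝ H) (hK : IsClosed (K : Set H))
    (Proj : H →L[ℝ] H) (hProjmem : ∀ x : H, Proj x ∈ K)
    (hProjid : ∀ e ∈ K, Proj e = e)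
    (hProjsa : ∀ x y : H, ⟪Proj x, y⟫ = ⟪x, Proj y⟫) :
    ∀ e ∈ K, ‖e - Proj (S e)‖ ≤ (1 - c) * ‖e‖ :=
  stmt_8_general S hsa hSnorm c hc1 hell K Proj hProjmem hProjid hProjsa
end

section
/- Let ι be a type, n : ι → ℕ with: (i) there exists i₀ ∈ ι with n(i₀) = 0, and (ii) for every N ∈ ℕ the set {i ∈ ι : n(i) ≤ N} is finite. Let o : ι → ι → ι be a binary overlay operation satisfying n(o(i,j)) ≤ n(i) + n(j) for all i, j ∈ ι. Let ρ₁, ρ₂, ρ₃ : ι → ℝ be nonnegative functions that are each monotone under overlay, i.e., ρ_k(o(i,j)) ≤ ρ_k(i) and ρ_k(o(i,j)) ≤ ρ_k(j) for all i, j ∈ ι and k ∈ {1,2,3}. For a nonnegative function ρ : ι → ℝ and s > 0, define A_s(ρ) := sup_{N∈ℕ} ( (N+1)^s · min{ρ(i) : n(i) ≤ N} ) in [0,∞]. Then for every s > 0: (1/3)·(A_s(ρ₁) + A_s(ρ₂) + A_s(ρ₃)) ≤ A_s(ρ₁ + ρ₂ + ρ₃) ≤ 3^s·(A_s(ρ₁)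 + A_s(ρ₂) + A_s(ρ₃)). -/
open scoped ENNReal

/-- The approximation norm of rate `s > 0` of a nonnegative error quantity `ρ` with respect
to a size function `n : ι → ℕ`, as a value in `[0,∞]`. -/
noncomputable def apxNorm {ι : Type*} (n : ι → ℕ) (ρ : ι → ℝ) (s : ℝ) : ℝ≥0∞ :=
  ⨆ N : ℕ, ENNReal.ofReal ((N + 1 : ℝ) ^ s) * ⨅ i ∈ {i | n i ≤ N}, ENNReal.ofReal (ρ i)

/-! Overlaying near-optimal objects of sizes `≤ M` for `ρ₁`, `ρ₂`, `ρ₃` gives an object of size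
`≤ 3M` whose total error is at most the sum of the three errors, so the best total error with
`N` degrees of freedom is bounded by the individual best errors with `N / 3` degrees of freedom;
the loss in the weight `(N + 1) ^ s` is the factor `3 ^ s`. The lower bound holds because each
`ρₖ` is dominated by the nonnegative sum. -/

namespace apxNorm

variable {ι : Type*} {n : ι → ℕ}

/-- Equals `∞` when no object has size `≤ N`. -/
noncomputable def bestErr (n : ι → ℕ) (ρ : ι → ℝ) (N : ℕ) : ℝ≥0∞ :=
  ⨅ i ∈ {i | n i ≤ N}, ENNReal.ofReal (ρ i)

theorem bestErr_antitone (ρ : ι → ℝ) : Antitone (bestErr n ρ) :=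
  fun _ _ hMN => biInf_mono fun _ hi => le_trans hi hMN

theorem bestErr_add_le {o : ι → ι → ι} (hover : ∀ i j, n (o i j) ≤ n i + n j)
    {ρ σ : ι → ℝ} (hρ : ∀ i j, ρ (o i j) ≤ ρ i) (hσ : ∀ i j, σ (o i j) ≤ σ j) (M K : ℕ) :
    bestErr n (fun i => ρ i + σ i) (M + K) ≤ bestErr n ρ M + bestErr n σ K :=
  ENNReal.le_iInf₂_add_iInf₂ fun i hi j hj =>
    calc bestErr n (fun i => ρ i + σ i) (M + K)
        ≤ ENNReal.ofReal (ρ (o i j) + σ (o i j)) :=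
          biInf_le _ ((hover i j).trans (add_le_add hi hj))
      _ ≤ ENNReal.ofReal (ρ i + σ j) := ENNReal.ofReal_le_ofReal (add_le_add (hρ i j) (hσ i j))
      _ ≤ ENNReal.ofReal (ρ i) + ENNReal.ofReal (σ j) := ENNReal.ofReal_add_le

theorem bestErr_add_add_le {o : ι → ι → ι} (hover : ∀ i j, n (o i j) ≤ n i + n j)
    {ρ₁ ρ₂ ρ₃ : ι → ℝ} (h₁ : ∀ i j, ρ₁ (o i j) ≤ ρ₁ i)
    (h₂ : ∀ i j, ρ₂ (o i j) ≤ ρ₂ i ∧ ρ₂ (o i j) ≤ ρ₂ j) (h₃ : ∀ i j, ρ₃ (o i j) ≤ ρ₃ j)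
    (M : ℕ) :
    bestErr n (fun i => ρ₁ i + ρ₂ i + ρ₃ i) (M + M + M) ≤
      bestErr n ρ₁ M + bestErr n ρ₂ M + bestErr n ρ₃ M :=
  calc bestErr n (fun i => ρ₁ i + ρ₂ i + ρ₃ i) (M + M + M)
      ≤ bestErr n (fun i => ρ₁ i + ρ₂ i) (M + M) + bestErr n ρ₃ M :=
        bestErr_add_le hover (fun i j => add_le_add (h₁ i j) (h₂ i j).1) h₃ _ _
    _ ≤ bestErr n ρ₁ M + bestErr n ρ₂ M + bestErr n ρ₃ M := by
        gcongr
        exact bestErr_add_le hover h₁ (fun i j => (h₂ i j).2) M M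

theorem ofReal_rpow_mul_bestErr_le (ρ : ι → ℝ) (s : ℝ) (N : ℕ) :
    ENNReal.ofReal ((N + 1 : ℝ) ^ s) * bestErr n ρ N ≤ apxNorm n ρ s :=
  le_iSup (fun N : ℕ => ENNReal.ofReal ((N + 1 : ℝ) ^ s) * bestErr n ρ N) N

theorem mono {ρ σ : ι → ℝ} (hρσ : ∀ i, ρ i ≤ σ i) (s : ℝ) :
    apxNorm n ρ s ≤ apxNorm n σ s :=
  iSup_mono fun _ => by gcongr with i; exact hρσ i

theorem natCast_add_one_rpow_le (N : ℕ) {s : ℝ} (hs : 0 ≤ s) :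
    ((N : ℝ) + 1) ^ s ≤ (3 : ℝ) ^ s * ((N / 3 : ℕ) + 1 : ℝ) ^ s := by
  rw [← Real.mul_rpow (by norm_num) (by positivity)]
  refine Real.rpow_le_rpow (by positivity) ?_ hs
  have h : N + 1 ≤ 3 * (N / 3 + 1) := by omega
  exact_mod_cast h

theorem add_add_le {o : ι → ι → ι} (hover : ∀ i j, n (o i j) ≤ n i + n j)
    {ρ₁ ρ₂ ρ₃ : ι → ℝ} (h₁ : ∀ i j, ρ₁ (o i j) ≤ ρ₁ i)
    (h₂ : ∀ i j, ρ₂ (o i j) ≤ ρ₂ i ∧ ρ₂ (o i j) ≤ ρ₂ j) (h₃ : ∀ i j, ρ₃ (o i j) ≤ ρ₃ j)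
    {s : ℝ} (hs : 0 ≤ s) :
    apxNorm n (fun i => ρ₁ i + ρ₂ i + ρ₃ i) s ≤
      ENNReal.ofReal ((3 : ℝ) ^ s) * (apxNorm n ρ₁ s + apxNorm n ρ₂ s + apxNorm n ρ₃ s) := by
  refine iSup_le fun N => ?_
  set M := N / 3
  have hbest : bestErr n (fun i => ρ₁ i + ρ₂ i + ρ₃ i) N ≤
      bestErr n ρ₁ M + bestErr n ρ₂ M + bestErr n ρ₃ M :=
    (bestErr_antitone _ (by omega)).trans (bestErr_add_add_le hover h₁ h₂ h₃ M)
  calc ENNReal.ofReal ((N + 1 : ℝ) ^ s) * bestErr n (fun i => ρ₁ i + ρ₂ i + ρ₃ i) N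
      ≤ ENNReal.ofReal ((3 : ℝ) ^ s) * ENNReal.ofReal ((M + 1 : ℝ) ^ s) *
          (bestErr n ρ₁ M + bestErr n ρ₂ M + bestErr n ρ₃ M) := by
        rw [← ENNReal.ofReal_mul (by positivity)]
        gcongr
        exact natCast_add_one_rpow_le N hs
    _ = ENNReal.ofReal ((3 : ℝ) ^ s) *
          (ENNReal.ofReal ((M + 1 : ℝ) ^ s) * bestErr n ρ₁ M +
            ENNReal.ofReal ((M + 1 : ℝ) ^ s) * bestErr n ρ₂ M +
            ENNReal.ofReal ((M + 1 : ℝ) ^ s) * bestErr n ρ₃ M) := by ring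
    _ ≤ ENNReal.ofReal ((3 : ℝ) ^ s) * (apxNorm n ρ₁ s + apxNorm n ρ₂ s + apxNorm n ρ₃ s) := by
        gcongr <;> exact ofReal_rpow_mul_bestErr_le _ s M

theorem inv_three_mul_add_add_le {ρ₁ ρ₂ ρ₃ : ι → ℝ}
    (hρ₁ : ∀ i, 0 ≤ ρ₁ i) (hρ₂ : ∀ i, 0 ≤ ρ₂ i) (hρ₃ : ∀ i, 0 ≤ ρ₃ i) (s : ℝ) :
    (1 / 3 : ℝ≥0∞) * (apxNorm n ρ₁ s + apxNorm n ρ₂ s + apxNorm n ρ₃ s) ≤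
      apxNorm n (fun i => ρ₁ i + ρ₂ i + ρ₃ i) s := by
  set F := apxNorm n (fun i => ρ₁ i + ρ₂ i + ρ₃ i) s
  have h₁ : apxNorm n ρ₁ s ≤ F := mono (fun i => by linarith [hρ₂ i, hρ₃ i]) s
  have h₂ : apxNorm n ρ₂ s ≤ F := mono (fun i => by linarith [hρ₁ i, hρ₃ i]) s
  have h₃ : apxNorm n ρ₃ s ≤ F := mono (fun i => by linarith [hρ₁ i, hρ₂ i]) s
  calc (1 / 3 : ℝ≥0∞) * (apxNorm n ρ₁ s + apxNorm n ρ₂ s + apxNorm n ρ₃ s)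
      ≤ (1 / 3 : ℝ≥0∞) * (F + F + F) := by gcongr
    _ = (1 / 3 * 3) * F := by ring
    _ = F := by rw [ENNReal.div_mul_cancel (by norm_num) (by norm_num), one_mul]

end apxNorm

theorem stmt_9_general {ι : Type*} (n : ι → ℕ)
    (o : ι → ι → ι) (hover : ∀ i j, n (o i j) ≤ n i + n j)
    (ρ₁ ρ₂ ρ₃ : ι → ℝ)
    (hρ₁ : ∀ i, 0 ≤ ρ₁ i) (hρ₂ : ∀ i, 0 ≤ ρ₂ i) (hρ₃ : ∀ i, 0 ≤ ρ₃ i)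
    (hmono₁ : ∀ i j, ρ₁ (o i j) ≤ ρ₁ i ∧ ρ₁ (o i j) ≤ ρ₁ j)
    (hmono₂ : ∀ i j, ρ₂ (o i j) ≤ ρ₂ i ∧ ρ₂ (o i j) ≤ ρ₂ j)
    (hmono₃ : ∀ i j, ρ₃ (o i j) ≤ ρ₃ i ∧ ρ₃ (o i j) ≤ ρ₃ j)
    (s : ℝ) (hs : 0 < s) :
    (1 / 3 : ℝ≥0∞) * (apxNorm n ρ₁ s + apxNorm n ρ₂ s + apxNorm n ρ₃ s) ≤
        apxNorm n (fun i => ρ₁ i + ρ₂ i + ρ₃ i) s ∧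
      apxNorm n (fun i => ρ₁ i + ρ₂ i + ρ₃ i) s ≤
        ENNReal.ofReal ((3 : ℝ) ^ s) * (apxNorm n ρ₁ s + apxNorm n ρ₂ s + apxNorm n ρ₃ s) :=
  ⟨apxNorm.inv_three_mul_add_add_le hρ₁ hρ₂ hρ₃ s,
    apxNorm.add_add_le hover (fun i j => (hmono₁ i j).1) hmono₂ (fun i j => (hmono₃ i j).2)
      hs.le⟩

/-- Equivalence of the approximation norm of the total error `ρ₁ + ρ₂ + ρ₃` with the sum of
the three individual approximation norms, for error quantities monotone under overlay. -/
theorem stmt_9 {ι : Type*} (n : ι → ℕ)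
    (hinit : ∃ i₀, n i₀ = 0) (hfin : ∀ N : ℕ, {i | n i ≤ N}.Finite)
    (o : ι → ι → ι) (hover : ∀ i j, n (o i j) ≤ n i + n j)
    (ρ₁ ρ₂ ρ₃ : ι → ℝ)
    (hρ₁ : ∀ i, 0 ≤ ρ₁ i) (hρ₂ : ∀ i, 0 ≤ ρ₂ i) (hρ₃ : ∀ i, 0 ≤ ρ₃ i)
    (hmono₁ : ∀ i j, ρ₁ (o i j) ≤ ρ₁ i ∧ ρ₁ (o i j) ≤ ρ₁ j)
    (hmono₂ : ∀ i j, ρ₂ (o i j) ≤ ρ₂ i ∧ ρ₂ (o i j) ≤ ρ₂ j)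
    (hmono₃ : ∀ i j, ρ₃ (o i j) ≤ ρ₃ i ∧ ρ₃ (o i j) ≤ ρ₃ j)
    (s : ℝ) (hs : 0 < s) :
    (1 / 3 : ℝ≥0∞) * (apxNorm n ρ₁ s + apxNorm n ρ₂ s + apxNorm n ρ₃ s) ≤
        apxNorm n (fun i => ρ₁ i + ρ₂ i + ρ₃ i) s ∧
      apxNorm n (fun i => ρ₁ i + ρ₂ i + ρ₃ i) s ≤
        ENNReal.ofReal ((3 : ℝ) ^ s) * (apxNorm n ρ₁ s + apxNorm n ρ₂ s + apxNorm n ρ₃ s) :=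
  stmt_9_general n o hover ρ₁ ρ₂ ρ₃ hρ₁ hρ₂ hρ₃ hmono₁ hmono₂ hmono₃ s hs
end

section
/- Let (a_ℓ)_{ℓ∈ℕ} be a sequence of strictly positive real numbers. Then the following two statements are equivalent: (a) the series ∑ a_n converges and there exists a constant C > 0 such that ∑_{n=ℓ}^∞ a_n ≤ C·a_ℓ for all ℓ ∈ ℕ; (b) for every s > 0 there exists a constant C > 0 such that ∑_{n=0}^{ℓ} a_n^{-1/s} ≤ C·a_ℓ^{-1/s} for all ℓ ∈ ℕ. -/
/-!
Both conditions are equivalent to geometric decay `a (n + k) ≤ K q^k a n` with `q < 1`.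
For the tails `T ℓ = a ℓ + T (ℓ + 1)`, the bound `T ℓ ≤ C a ℓ` forces `T (ℓ + 1) ≤ (1 - C⁻¹) T ℓ`;
dually, for the partial sums `P` of `b = a^(-1/s)`, the bound `P ℓ ≤ C b ℓ` forces
`P ℓ ≤ (1 - C⁻¹) P (ℓ + 1)`. Geometric decay of `a` is geometric growth of `a^(-1/s)`, and summing
a geometric series gives back both bounds. For (b) ⇒ (a) the case `s = 1` suffices.
-/

open Finset

lemma inv_le_mul_inv_iff {x y c : ℝ} (hx : 0 < x) (hy : 0 < y) : x⁻¹ ≤ c * y⁻¹ ↔ y ≤ c * x := by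
  rw [← div_eq_mul_inv, le_div_iff₀ hy, inv_mul_le_iff₀ hx, mul_comm]

lemma sum_range_pow_le_inv_one_sub {q : ℝ} (hq0 : 0 ≤ q) (hq1 : q < 1) (n : ℕ) :
    ∑ k ∈ range n, q ^ k ≤ (1 - q)⁻¹ := by
  rw [← tsum_geometric_of_lt_one hq0 hq1]
  exact (summable_geometric_of_lt_one hq0 hq1).sum_le_tsum _ fun k _ ↦ pow_nonneg hq0 k

lemma le_one_sub_inv_mul_of_eq_add {x y d C : ℝ} (hC : 0 < C) (hx : x = y + d) (hxd : x ≤ C * d) :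
    y ≤ (1 - C⁻¹) * x := by
  have : C⁻¹ * x ≤ d := by rwa [inv_mul_le_iff₀ hC]
  linarith [show (1 - C⁻¹) * x = x - C⁻¹ * x by ring]

lemma one_le_of_le_of_le_mul {d x C : ℝ} (hd : 0 < d) (hdx : d ≤ x) (hxd : x ≤ C * d) : 1 ≤ C :=
  le_of_mul_le_mul_right (by linarith) hd

variable {a : ℕ → ℝ} {C K q : ℝ}

lemma decay_of_tsum_tail_le (ha : ∀ n, 0 < a n) (hs : Summable a)
    (hC : ∀ ℓ, ∑' n, a (ℓ + n) ≤ C * a ℓ) :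
    ∃ q, 0 ≤ q ∧ q < 1 ∧ ∀ n k, a (n + k) ≤ C * q ^ k * a n := by
  set T : ℕ → ℝ := fun ℓ ↦ ∑' n, a (ℓ + n)
  have hsT (ℓ : ℕ) : Summable fun n ↦ a (ℓ + n) := by
    simpa only [add_comm ℓ] using (summable_nat_add_iff ℓ).2 hs
  have ha_le_T (ℓ : ℕ) : a ℓ ≤ T ℓ := by
    simpa using (hsT ℓ).le_tsum 0 fun n _ ↦ (ha _).le
  have hT_succ (ℓ : ℕ) : T ℓ = T (ℓ + 1) + a ℓ := by
    simp only [T, (hsT ℓ).tsum_eq_zero_add, add_zero, add_assoc, add_comm 1, add_comm (a ℓ)]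
  have hC1 : 1 ≤ C := one_le_of_le_of_le_mul (ha 0) (ha_le_T 0) (hC 0)
  have hC0 : 0 < C := zero_lt_one.trans_le hC1
  have hq0 : 0 ≤ 1 - C⁻¹ := sub_nonneg.2 (inv_le_one_of_one_le₀ hC1)
  refine ⟨1 - C⁻¹, hq0, by simpa using hC0, fun n k ↦ ?_⟩
  have hdecay : T (n + k) ≤ (1 - C⁻¹) ^ k * T n :=
    le_geom hq0 k fun j _ ↦
      le_one_sub_inv_mul_of_eq_add hC0 (hT_succ (n + j)) (hC (n + j))
  calc a (n + k) ≤ T (n + k) := ha_le_T _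
    _ ≤ (1 - C⁻¹) ^ k * T n := hdecay
    _ ≤ (1 - C⁻¹) ^ k * (C * a n) := mul_le_mul_of_nonneg_left (hC n) (pow_nonneg hq0 k)
    _ = C * (1 - C⁻¹) ^ k * a n := by ring

lemma growth_of_sum_range_le (ha : ∀ n, 0 < a n)
    (hC : ∀ ℓ, ∑ n ∈ range (ℓ + 1), a n ≤ C * a ℓ) :
    ∃ q, 0 ≤ q ∧ q < 1 ∧ ∀ n k, a n ≤ C * q ^ k * a (n + k) := by
  set P : ℕ → ℝ := fun ℓ ↦ ∑ n ∈ range (ℓ + 1), a n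
  have ha_le_P (ℓ : ℕ) : a ℓ ≤ P ℓ :=
    single_le_sum (fun n _ ↦ (ha n).le) (self_mem_range_succ ℓ)
  have hP_succ (ℓ : ℕ) : P (ℓ + 1) = P ℓ + a (ℓ + 1) := sum_range_succ _ _
  have hC1 : 1 ≤ C := one_le_of_le_of_le_mul (ha 0) (ha_le_P 0) (hC 0)
  have hC0 : 0 < C := zero_lt_one.trans_le hC1
  have hq0 : 0 ≤ 1 - C⁻¹ := sub_nonneg.2 (inv_le_one_of_one_le₀ hC1)
  refine ⟨1 - C⁻¹, hq0, by simpa using hC0, fun n k ↦ ?_⟩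
  have hgrowth : P n ≤ (1 - C⁻¹) ^ k * P (n + k) := by
    induction k with
    | zero => simp
    | succ k ih =>
      calc P n ≤ (1 - C⁻¹) ^ k * P (n + k) := ih
        _ ≤ (1 - C⁻¹) ^ k * ((1 - C⁻¹) * P (n + k + 1)) :=
          mul_le_mul_of_nonneg_left
            (le_one_sub_inv_mul_of_eq_add hC0 (hP_succ _) (hC _)) (pow_nonneg hq0 k)
        _ = (1 - C⁻¹) ^ (k + 1) * P (n + (k + 1)) := by ring_nf
  calc a n ≤ P n := ha_le_P n
    _ ≤ (1 - C⁻¹) ^ k * P (n + k) := hgrowth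
    _ ≤ (1 - C⁻¹) ^ k * (C * a (n + k)) := mul_le_mul_of_nonneg_left (hC _) (pow_nonneg hq0 k)
    _ = C * (1 - C⁻¹) ^ k * a (n + k) := by ring

lemma summable_and_tsum_tail_le_of_decay (ha : ∀ n, 0 ≤ a n) (hq0 : 0 ≤ q) (hq1 : q < 1)
    (h : ∀ n k, a (n + k) ≤ K * q ^ k * a n) :
    Summable a ∧ ∀ ℓ, ∑' n, a (ℓ + n) ≤ K * (1 - q)⁻¹ * a ℓ := by
  have hgeom (ℓ : ℕ) : HasSum (fun k ↦ K * a ℓ * q ^ k) (K * a ℓ * (1 - q)⁻¹) :=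
    (hasSum_geometric_of_lt_one hq0 hq1).mul_left _
  have hle (ℓ k : ℕ) : a (ℓ + k) ≤ K * a ℓ * q ^ k := (h ℓ k).trans_eq (by ring)
  have hs : Summable a :=
    (hgeom 0).summable.of_nonneg_of_le ha fun k ↦ by simpa using hle 0 k
  refine ⟨hs, fun ℓ ↦ ?_⟩
  have hsℓ : Summable fun n ↦ a (ℓ + n) := by
    simpa only [add_comm ℓ] using (summable_nat_add_iff ℓ).2 hs
  exact (hasSum_le (hle ℓ) hsℓ.hasSum (hgeom ℓ)).trans_eq (by ring)

lemma sum_range_le_of_growth (ha : ∀ n, 0 ≤ a n) (hK : 0 ≤ K) (hq0 : 0 ≤ q) (hq1 : q < 1)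
    (h : ∀ n k, a n ≤ K * q ^ k * a (n + k)) (ℓ : ℕ) :
    ∑ n ∈ range (ℓ + 1), a n ≤ K * (1 - q)⁻¹ * a ℓ := by
  calc ∑ n ∈ range (ℓ + 1), a n ≤ ∑ n ∈ range (ℓ + 1), K * a ℓ * q ^ (ℓ - n) :=
        sum_le_sum fun n hn ↦ by
          obtain ⟨k, rfl⟩ := Nat.exists_eq_add_of_le (mem_range_succ_iff.1 hn)
          simpa [mul_right_comm K] using h n k
    _ = K * a ℓ * ∑ k ∈ range (ℓ + 1), q ^ k := by
        rw [← mul_sum, ← sum_range_reflect (fun k ↦ q ^ k)]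
        simp
    _ ≤ K * a ℓ * (1 - q)⁻¹ :=
        mul_le_mul_of_nonneg_left (sum_range_pow_le_inv_one_sub hq0 hq1 _) (mul_nonneg hK (ha ℓ))
    _ = K * (1 - q)⁻¹ * a ℓ := by ring

lemma rpow_neg_growth_of_decay (ha : ∀ n, 0 < a n) (hK : 0 ≤ K) (hq0 : 0 ≤ q)
    (h : ∀ n k, a (n + k) ≤ K * q ^ k * a n) {p : ℝ} (hp : 0 < p) (n k : ℕ) :
    a n ^ (-p) ≤ K ^ p * (q ^ p) ^ k * a (n + k) ^ (-p) := by
  rw [Real.rpow_neg (ha _).le, Real.rpow_neg (ha _).le,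
    inv_le_mul_inv_iff (Real.rpow_pos_of_pos (ha _) p) (Real.rpow_pos_of_pos (ha _) p)]
  calc a (n + k) ^ p ≤ (K * q ^ k * a n) ^ p := Real.rpow_le_rpow (ha _).le (h n k) hp.le
    _ = K ^ p * (q ^ p) ^ k * a n ^ p := by
      rw [Real.mul_rpow (by positivity) (ha n).le, Real.mul_rpow hK (by positivity),
        ← Real.rpow_natCast, ← Real.rpow_natCast, ← Real.rpow_mul hq0, ← Real.rpow_mul hq0,
        mul_comm p]

/-- For a strictly positive real sequence `(a_ℓ)`, the uniform tail-summability condition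
`∑_{n=ℓ}^∞ a_n ≤ C a_ℓ` is equivalent to the condition that for every `s > 0` there is
`C > 0` with `∑_{n=0}^{ℓ} a_n^{-1/s} ≤ C a_ℓ^{-1/s}` for all `ℓ`. -/
theorem stmt_10 (a : ℕ → ℝ) (ha : ∀ ℓ : ℕ, 0 < a ℓ) :
    (Summable a ∧ ∃ C : ℝ, 0 < C ∧ ∀ ℓ : ℕ, (∑' n : ℕ, a (ℓ + n)) ≤ C * a ℓ) ↔
    (∀ s : ℝ, 0 < s → ∃ C : ℝ, 0 < C ∧
        ∀ ℓ : ℕ, (∑ n ∈ Finset.range (ℓ + 1), a n ^ (-(1 / s))) ≤ C * a ℓ ^ (-(1 / s))) := by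
  constructor
  · rintro ⟨hs, C, hC, htail⟩ s hs_pos
    obtain ⟨q, hq0, hq1, hdecay⟩ := decay_of_tsum_tail_le ha hs htail
    have hp : 0 < 1 / s := one_div_pos.2 hs_pos
    have hqp1 : q ^ (1 / s) < 1 := Real.rpow_lt_one hq0 hq1 hp
    refine ⟨C ^ (1 / s) * (1 - q ^ (1 / s))⁻¹,
      mul_pos (Real.rpow_pos_of_pos hC _) (inv_pos.2 (sub_pos.2 hqp1)), ?_⟩
    exact sum_range_le_of_growth (fun n ↦ (Real.rpow_pos_of_pos (ha n) _).le)
      (Real.rpow_nonneg hC.le _) (Real.rpow_nonneg hq0 _) hqp1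
      (rpow_neg_growth_of_decay ha hC.le hq0 hdecay hp)
  · intro h
    obtain ⟨C, hC, hsum⟩ := h 1 one_pos
    simp only [div_one, Real.rpow_neg_one] at hsum
    obtain ⟨q, hq0, hq1, hgrowth⟩ := growth_of_sum_range_le (fun n ↦ inv_pos.2 (ha n)) hsum
    have hdecay (n k : ℕ) : a (n + k) ≤ C * q ^ k * a n :=
      (inv_le_mul_inv_iff (ha n) (ha (n + k))).1 (hgrowth n k)
    obtain ⟨hs, htail⟩ := summable_and_tsum_tail_le_of_decay (fun n ↦ (ha n).le) hq0 hq1 hdecay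
    exact ⟨hs, C * (1 - q)⁻¹, mul_pos hC (inv_pos.2 (sub_pos.2 hq1)), htail⟩
end
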